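/- Let N ≥ 1 be an integer, λ > 0, and μ > 0. Then the function ψ_0(x) = ∏_{j=1}^N e^{−x_j²/2} x_j^μ · ∏_{1≤j<k≤N} (x_k² − x_j²)^λ satisfies H_μ ψ_0 = E_0 ψ_0 on the open set {x ∈ ℝ^N : 0 < x_1 < x_2 < ⋯ < x_N}, where E_0 = N(1 + 2μ + 2λ(N−1)). -/

import Mathlib

/-- Partial derivative in the `j`-th coordinate of a function on `ℝ^N`. -/
noncomputable def pd {N : ℕ} (j : Fin N) (f : (Fin N → ℝ) → ℝ) : (Fin N → ℝ) → ℝ :=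
  fun x => deriv (fun t => f (Function.update x j t)) (x j)

/-- The `B_N` Calogero Hamiltonian with parameters `(mu, lam)` in `N` variables. -/
noncomputable def calogeroB (N : ℕ) (mu lam : ℝ) (f : (Fin N → ℝ) → ℝ) : (Fin N → ℝ) → ℝ :=
  fun x => (∑ j, (- pd j (pd j f) x + ((x j)^2 + mu*(mu-1)/(x j)^2) * f x)) +
    4*lam*(lam-1) * ∑ j, ∑ k, (if j < k then
      ((x j)^2 + (x k)^2) / ((x j)^2 - (x k)^2)^2 * f x else 0)

/-- The ground state `ψ₀` of the `B_N` Calogero model. -/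
noncomputable def psi0B (N : ℕ) (mu lam : ℝ) (x : Fin N → ℝ) : ℝ :=
  (∏ j, Real.exp (-(x j)^2/2) * (x j) ^ mu) *
  ∏ j, ∏ k, (if j < k then ((x k)^2 - (x j)^2) ^ lam else 1)

noncomputable def ellB (N : ℕ) (mu lam : ℝ) (y : Fin N → ℝ) : ℝ :=
  (∑ j, (-(y j)^2/2 + mu * Real.log (y j))) +
  lam * ∑ j, ∑ k, (if j < k then Real.log ((y k)^2 - (y j)^2) else 0)

noncomputable def D1B (N : ℕ) (mu lam : ℝ) (x : Fin N → ℝ) (j : Fin N) (t : ℝ) : ℝ :=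
  -t + mu/t + 2*lam*t * ∑ k, (if k ≠ j then (t^2 - (x k)^2)⁻¹ else 0)

noncomputable def D2B (N : ℕ) (mu lam : ℝ) (x : Fin N → ℝ) (j : Fin N) (t : ℝ) : ℝ :=
  -1 - mu/t^2 - 2*lam * ∑ k, (if k ≠ j then (t^2 + (x k)^2)/(t^2 - (x k)^2)^2 else 0)

lemma psi0B_eq_exp (N : ℕ) (mu lam : ℝ) (y : Fin N → ℝ)
    (hpos : ∀ m, 0 < y m) (hord : ∀ m k : Fin N, m < k → y m < y k) :
    psi0B N mu lam y = Real.exp (ellB N mu lam y) := by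
  unfold psi0B ellB
  rw [Real.exp_add, Real.exp_sum]
  congr 1
  · refine Finset.prod_congr rfl fun j _ => ?_
    rw [Real.exp_add, Real.rpow_def_of_pos (hpos j), mul_comm (Real.log (y j)) mu]
  · rw [Finset.mul_sum, Real.exp_sum]
    refine Finset.prod_congr rfl fun j _ => ?_
    rw [Finset.mul_sum, Real.exp_sum]
    refine Finset.prod_congr rfl fun k _ => ?_
    split_ifs with h
    · have hb : 0 < (y k)^2 - (y j)^2 := by
        have := hord j k h; have := hpos j; nlinarith
      rw [Real.rpow_def_of_pos hb, mul_comm (Real.log _) lam]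
    · simp

lemma hasDerivAt_ellB_update (N : ℕ) (mu lam : ℝ) (x : Fin N → ℝ) (j : Fin N) (t : ℝ)
    (ht : t ≠ 0) (hne : ∀ k, k ≠ j → t^2 - (x k)^2 ≠ 0) :
    HasDerivAt (fun s => ellB N mu lam (Function.update x j s)) (D1B N mu lam x j t) t := by
  have hF : ∀ m : Fin N, HasDerivAt
      (fun s => -(Function.update x j s m)^2/2 + mu * Real.log (Function.update x j s m))
      (if m = j then -t + mu/t else 0) t := by
    intro m
    by_cases hm : m = j
    · subst hm
      simp only [Function.update_self, if_pos rfl]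
      have h1 : HasDerivAt (fun s : ℝ => -s^2/2) (-t) t := by
        have := ((hasDerivAt_pow 2 t).neg).div_const 2
        exact this.congr_deriv (by push_cast; ring)
      have h2 : HasDerivAt (fun s : ℝ => mu * Real.log s) (mu/t) t := by
        simpa [div_eq_mul_inv] using (Real.hasDerivAt_log ht).const_mul mu
      exact h1.add h2
    · simp only [Function.update_of_ne hm, if_neg hm]
      exact hasDerivAt_const t _
  have hG : ∀ m k : Fin N, HasDerivAt
      (fun s => if m < k then Real.log ((Function.update x j s k)^2 - (Function.update x j s m)^2) else 0)
      (if m < k then (if k = j then 2*t/(t^2-(x m)^2) else if m = j then -(2*t)/((x k)^2-t^2) else 0) else 0) t := by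
    intro m k
    by_cases hmk : m < k
    · by_cases hk : k = j
      · have hmj : m ≠ j := hk ▸ ne_of_lt hmk
        have e : (fun s : ℝ => if m < k then
            Real.log ((Function.update x j s k)^2 - (Function.update x j s m)^2) else 0)
            = fun s => Real.log (s^2 - (x m)^2) := by
          funext s
          rw [if_pos hmk, Function.update_of_ne hmj, hk, Function.update_self]
        rw [e, if_pos hmk, if_pos hk]
        have hd : HasDerivAt (fun s : ℝ => s^2 - (x m)^2) (2*t) t := by
          have := (hasDerivAt_pow 2 t).sub_const ((x m)^2)
          exact this.congr_deriv (by push_cast; ring)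
        exact hd.log (hne m hmj)
      · by_cases hm : m = j
        · have e : (fun s : ℝ => if m < k then
              Real.log ((Function.update x j s k)^2 - (Function.update x j s m)^2) else 0)
              = fun s => Real.log ((x k)^2 - s^2) := by
            funext s
            rw [if_pos hmk, Function.update_of_ne hk, hm, Function.update_self]
          rw [e, if_pos hmk, if_neg hk, if_pos hm]
          have hd : HasDerivAt (fun s : ℝ => (x k)^2 - s^2) (-(2*t)) t := by
            have := (hasDerivAt_pow 2 t).const_sub ((x k)^2)
            exact this.congr_deriv (by push_cast; ring)
          have hne' : (x k)^2 - t^2 ≠ 0 := by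
            intro h; exact hne k hk (by linarith [sub_eq_zero.mp h])
          exact hd.log hne'
        · have e : (fun s : ℝ => if m < k then
              Real.log ((Function.update x j s k)^2 - (Function.update x j s m)^2) else 0)
              = fun _ => Real.log ((x k)^2 - (x m)^2) := by
            funext s
            rw [if_pos hmk, Function.update_of_ne hk, Function.update_of_ne hm]
          rw [e, if_pos hmk, if_neg hk, if_neg hm]
          exact hasDerivAt_const t _
    · have e : (fun s : ℝ => if m < k then
          Real.log ((Function.update x j s k)^2 - (Function.update x j s m)^2) else 0)
          = fun _ => (0:ℝ) := by
        funext s; rw [if_neg hmk]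
      rw [e, if_neg hmk]
      exact hasDerivAt_const t _
  have hmain : HasDerivAt (fun s => ellB N mu lam (Function.update x j s))
      ((∑ m, if m = j then -t + mu/t else 0) +
        lam * ∑ m, ∑ k, (if m < k then (if k = j then 2*t/(t^2-(x m)^2)
          else if m = j then -(2*t)/((x k)^2-t^2) else 0) else 0)) t := by
    exact (HasDerivAt.fun_sum fun m _ => hF m).add
      ((HasDerivAt.fun_sum fun m _ => HasDerivAt.fun_sum fun k _ => hG m k).const_mul lam)
  convert hmain using 1
  have e1 : (∑ m : Fin N, if m = j then -t + mu/t else 0) = -t + mu/t := by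
    rw [Finset.sum_ite_eq' Finset.univ j (fun _ => -t + mu/t)]; simp
  have e2 : (∑ m : Fin N, ∑ k : Fin N, (if m < k then (if k = j then 2*t/(t^2-(x m)^2)
          else if m = j then -(2*t)/((x k)^2-t^2) else 0) else 0))
      = 2*t*∑ k, (if k ≠ j then (t^2 - (x k)^2)⁻¹ else 0) := by
    have split : ∀ m k : Fin N, (if m < k then (if k = j then 2*t/(t^2-(x m)^2)
          else if m = j then -(2*t)/((x k)^2-t^2) else 0) else 0)
        = (if k = j then (if m < j then 2*t/(t^2-(x m)^2) else 0) else 0)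
          + (if m = j then (if j < k then -(2*t)/((x k)^2-t^2) else 0) else 0) := by
      intro m k
      by_cases h1 : m < k
      · by_cases h2 : k = j
        · have hmj : m < j := h2 ▸ h1
          simp [h1, h2, hmj, ne_of_lt hmj]
        · by_cases h3 : m = j
          · have hjk : j < k := by rw [← h3]; exact h1
            simp [h1, h2, h3, hjk]
          · simp [h1, h2, h3]
      · by_cases h2 : k = j
        · have hmj : ¬ m < j := h2 ▸ h1
          simp [h1, h2, hmj]
        · by_cases h3 : m = j
          · have hjk : ¬ j < k := by rw [← h3]; exact h1
            simp [h1, h2, h3, hjk]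
          · simp [h1, h2, h3]
    calc (∑ m : Fin N, ∑ k : Fin N, (if m < k then (if k = j then 2*t/(t^2-(x m)^2)
          else if m = j then -(2*t)/((x k)^2-t^2) else 0) else 0))
        = (∑ m : Fin N, ∑ k : Fin N, ((if k = j then (if m < j then 2*t/(t^2-(x m)^2) else 0) else 0)
          + (if m = j then (if j < k then -(2*t)/((x k)^2-t^2) else 0) else 0))) := by
          exact Finset.sum_congr rfl fun m _ => Finset.sum_congr rfl fun k _ => split m k
      _ = (∑ m : Fin N, (if m < j then 2*t/(t^2-(x m)^2) else 0))
          + (∑ m : Fin N, if m = j then (∑ k : Fin N, (if j < k then -(2*t)/((x k)^2-t^2) else 0)) else 0) := by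
          rw [← Finset.sum_add_distrib]
          refine Finset.sum_congr rfl fun m _ => ?_
          rw [Finset.sum_add_distrib]
          congr 1
          · rw [Finset.sum_ite_eq' Finset.univ j]; simp
          · by_cases hm : m = j <;> simp [hm]
      _ = (∑ k : Fin N, (if k < j then 2*t/(t^2-(x k)^2) else 0))
          + (∑ k : Fin N, (if j < k then -(2*t)/((x k)^2-t^2) else 0)) := by
          congr 1
          rw [Finset.sum_ite_eq' Finset.univ j]; simp
      _ = ∑ k : Fin N, (if k ≠ j then 2*t*(t^2 - (x k)^2)⁻¹ else 0) := by
          rw [← Finset.sum_add_distrib]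
          refine Finset.sum_congr rfl fun k _ => ?_
          rcases lt_trichotomy k j with h | h | h
          · simp only [if_pos h, if_neg (not_lt_of_gt h), if_pos (ne_of_lt h), add_zero]
            rw [div_eq_mul_inv]
          · simp [h]
          · simp only [if_neg (not_lt_of_gt h), if_pos h, if_pos (ne_of_gt h), zero_add]
            rw [neg_div, ← div_neg, neg_sub, div_eq_mul_inv]
      _ = 2*t*∑ k, (if k ≠ j then (t^2 - (x k)^2)⁻¹ else 0) := by
          rw [Finset.mul_sum]
          refine Finset.sum_congr rfl fun k _ => ?_
          by_cases hk : k ≠ j <;> simp [hk]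
  rw [e1, e2]
  unfold D1B
  ring

lemma hasDerivAt_D1B (N : ℕ) (mu lam : ℝ) (x : Fin N → ℝ) (j : Fin N) (t : ℝ)
    (ht : t ≠ 0) (hne : ∀ k, k ≠ j → t^2 - (x k)^2 ≠ 0) :
    HasDerivAt (fun s => D1B N mu lam x j s) (D2B N mu lam x j t) t := by
  have h1 : HasDerivAt (fun s : ℝ => -s) (-1 : ℝ) t := by
    exact (hasDerivAt_id t).neg
  have h2 : HasDerivAt (fun s : ℝ => mu/s) (-(mu/t^2)) t := by
    have := (hasDerivAt_inv ht).const_mul mu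
    simp only [div_eq_mul_inv]
    exact this.congr_deriv (by ring)
  have hsum : ∀ k : Fin N, HasDerivAt (fun s : ℝ => if k ≠ j then (s^2 - (x k)^2)⁻¹ else 0)
      (if k ≠ j then -(2*t)/(t^2-(x k)^2)^2 else 0) t := by
    intro k
    by_cases hk : k ≠ j
    · simp only [if_pos hk]
      have hd : HasDerivAt (fun s : ℝ => s^2 - (x k)^2) (2*t) t := by
        have := (hasDerivAt_pow 2 t).sub_const ((x k)^2)
        exact this.congr_deriv (by push_cast; ring)
      have := hd.inv (hne k hk)
      exact this
    · simp only [if_neg hk]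
      exact hasDerivAt_const t _
  have hS : HasDerivAt (fun s : ℝ => ∑ k, (if k ≠ j then (s^2 - (x k)^2)⁻¹ else 0))
      (∑ k, (if k ≠ j then -(2*t)/(t^2-(x k)^2)^2 else 0)) t :=
    HasDerivAt.fun_sum fun k _ => hsum k
  have h3 : HasDerivAt (fun s : ℝ => 2*lam*s * ∑ k, (if k ≠ j then (s^2 - (x k)^2)⁻¹ else 0))
      ((2*lam) * (∑ k, (if k ≠ j then (t^2 - (x k)^2)⁻¹ else 0))
        + 2*lam*t * ∑ k, (if k ≠ j then -(2*t)/(t^2-(x k)^2)^2 else 0)) t := by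
    have hf : HasDerivAt (fun s : ℝ => 2*lam*s) (2*lam) t := by
      simpa using (hasDerivAt_id t).const_mul (2*lam)
    have := hf.mul hS
    exact this
  have hmain := (h1.add h2).add h3
  refine hmain.congr_deriv ?_
  symm
  unfold D2B
  have key : (∑ k, (if k ≠ j then (t^2 - (x k)^2)⁻¹ else 0))
      + t * (∑ k, (if k ≠ j then -(2*t)/(t^2-(x k)^2)^2 else 0))
      + (∑ k, (if k ≠ j then (t^2 + (x k)^2)/(t^2 - (x k)^2)^2 else 0)) = 0 := by
    rw [Finset.mul_sum, ← Finset.sum_add_distrib, ← Finset.sum_add_distrib]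
    refine Finset.sum_eq_zero fun k _ => ?_
    by_cases hk : k ≠ j
    · simp only [if_pos hk]
      have h := hne k hk
      field_simp
      ring
    · simp [hk]
  linear_combination (-2*lam) * key

lemma pair_dsum {N : ℕ} (f g : Fin N → Fin N → ℝ) (h : ∀ j k, f j k + f k j = g j k) :
    2 * (∑ j, ∑ k, f j k) = ∑ j, ∑ k, g j k := by
  have e : (∑ j, ∑ k, f k j) = ∑ j, ∑ k, f j k := Finset.sum_comm
  calc 2 * (∑ j, ∑ k, f j k) = (∑ j, ∑ k, f j k) + (∑ j, ∑ k, f k j) := by rw [e]; ring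
    _ = ∑ j, ∑ k, (f j k + f k j) := by
        rw [← Finset.sum_add_distrib]
        exact Finset.sum_congr rfl fun j _ => (Finset.sum_add_distrib).symm
    _ = ∑ j, ∑ k, g j k := Finset.sum_congr rfl fun j _ => Finset.sum_congr rfl fun k _ => h j k

lemma hrot {N : ℕ} (f : Fin N → Fin N → Fin N → ℝ) :
    (∑ j, ∑ k, ∑ l, f k l j) = ∑ j, ∑ k, ∑ l, f j k l := by
  have step1 : (∑ j, ∑ k, ∑ l, f k l j) = ∑ j, ∑ k, ∑ l, f j l k := Finset.sum_comm
  rw [step1]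
  exact Finset.sum_congr rfl fun j _ => Finset.sum_comm

lemma scalarB (N : ℕ) (mu lam : ℝ) (x : Fin N → ℝ)
    (h0 : ∀ j, x j ≠ 0) (hA : ∀ j k : Fin N, j ≠ k → (x j)^2 - (x k)^2 ≠ 0) :
    (∑ j, (-(D1B N mu lam x j (x j))^2 - D2B N mu lam x j (x j)
        + (x j)^2 + mu*(mu-1)/(x j)^2))
      + 4*lam*(lam-1) * (∑ j, ∑ k, (if j < k then
          ((x j)^2+(x k)^2)/((x j)^2-(x k)^2)^2 else 0))
    = N*(1+2*mu+2*lam*(N-1)) := by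
  -- abbreviations
  set u : Fin N → Fin N → ℝ := fun j k => ((x j)^2 - (x k)^2)⁻¹ with hu
  set S : Fin N → ℝ := fun j => ∑ k, (if k ≠ j then u j k else 0) with hSdef
  set Q : Fin N → ℝ := fun j => ∑ k,
    (if k ≠ j then ((x j)^2 + (x k)^2)/((x j)^2 - (x k)^2)^2 else 0) with hQdef
  -- step 1 : rewrite each summand
  have hterm : ∀ j : Fin N, -(D1B N mu lam x j (x j))^2 - D2B N mu lam x j (x j)
        + (x j)^2 + mu*(mu-1)/(x j)^2
      = (1+2*mu) + 4*lam*((x j)^2 * S j) - 4*lam*mu*(S j)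
        - 4*lam^2*((x j)^2*(S j)^2) + 2*lam*(Q j) := by
    intro j
    have h := h0 j
    have e1 : D1B N mu lam x j (x j) = -(x j) + mu/(x j) + 2*lam*(x j) * S j := rfl
    have e2 : D2B N mu lam x j (x j) = -1 - mu/(x j)^2 - 2*lam * Q j := rfl
    rw [e1, e2]
    field_simp
    ring
  rw [Finset.sum_congr rfl fun j _ => hterm j]
  -- step 2 : distribute the sum
  have hsplit : ∑ j : Fin N, ((1+2*mu) + 4*lam*((x j)^2 * S j) - 4*lam*mu*(S j)
        - 4*lam^2*((x j)^2*(S j)^2) + 2*lam*(Q j))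
      = (N:ℝ)*(1+2*mu) + 4*lam*(∑ j, (x j)^2 * S j) - 4*lam*mu*(∑ j, S j)
        - 4*lam^2*(∑ j, (x j)^2*(S j)^2) + 2*lam*(∑ j, Q j) := by
    simp only [Finset.sum_add_distrib, Finset.sum_sub_distrib, ← Finset.mul_sum,
      Finset.sum_const, Finset.card_univ, Fintype.card_fin, nsmul_eq_mul]
    ring
  rw [hsplit]
  -- facts
  have hZ : (∑ j, S j) = 0 := by
    have h2 : 2 * (∑ j, ∑ k, (if k ≠ j then u j k else 0)) = ∑ j : Fin N, ∑ k : Fin N, (0:ℝ) := by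
      refine pair_dsum _ _ fun j k => ?_
      by_cases hk : k = j
      · simp [hk]
      · rw [if_pos hk, if_pos (Ne.symm hk), hu]
        simp only
        rw [show (x k)^2 - (x j)^2 = -((x j)^2 - (x k)^2) by ring, inv_neg]
        ring
    simp only [Finset.sum_const_zero] at h2
    have : (∑ j, S j) = ∑ j, ∑ k, (if k ≠ j then u j k else 0) := rfl
    rw [this]; linarith
  have hW : 2 * (∑ j, (x j)^2 * S j) = (N:ℝ)*((N:ℝ)-1) := by
    have e : (∑ j, (x j)^2 * S j) = ∑ j, ∑ k, (if k ≠ j then (x j)^2 * u j k else 0) := by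
      refine Finset.sum_congr rfl fun j _ => ?_
      rw [hSdef]; simp only [Finset.mul_sum, mul_ite, mul_zero]
    rw [e]
    have h2 : 2 * (∑ j, ∑ k, (if k ≠ j then (x j)^2 * u j k else 0))
        = ∑ j : Fin N, ∑ k : Fin N, (if k ≠ j then (1:ℝ) else 0) := by
      refine pair_dsum _ _ fun j k => ?_
      by_cases hk : k = j
      · simp [hk]
      · rw [if_pos hk, if_pos (Ne.symm hk), if_pos hk, hu]
        simp only
        have d1 := hA j k (Ne.symm hk)
        have d2 := hA k j hk
        field_simp
        ring
    rw [h2]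
    have inner : ∀ j : Fin N, (∑ k : Fin N, (if k ≠ j then (1:ℝ) else 0)) = (N:ℝ) - 1 := by
      intro j
      have e2 : ∀ k : Fin N, (if k ≠ j then (1:ℝ) else 0) = 1 - (if k = j then 1 else 0) := by
        intro k; by_cases hk : k = j <;> simp [hk]
      rw [Finset.sum_congr rfl fun k _ => e2 k, Finset.sum_sub_distrib,
        Finset.sum_ite_eq' Finset.univ j (fun _ => (1:ℝ))]
      simp
    rw [Finset.sum_congr rfl fun j _ => inner j]
    simp [Finset.sum_const, Finset.card_univ, mul_comm]; ring
  -- the triple-sum fact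
  set d : Fin N → Fin N → Fin N → ℝ := fun j k l =>
    if k ≠ j ∧ l ≠ j ∧ l ≠ k then (x j)^2 * (u j k * u j l) else 0 with hd
  have hcyc : ∀ j k l : Fin N, d j k l + d k l j + d l j k = 0 := by
    intro j k l
    by_cases h1 : k ≠ j
    · by_cases h2 : l ≠ j
      · by_cases h3 : l ≠ k
        · rw [hd]; simp only
          rw [if_pos ⟨h1, h2, h3⟩, if_pos ⟨h3, Ne.symm h1, Ne.symm h2⟩,
            if_pos ⟨Ne.symm h2, Ne.symm h3, h1⟩, hu]
          simp only
          have d1 := hA j k h1.symm; have d2 := hA k j h1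
          have d3 := hA j l h2.symm; have d4 := hA l j h2
          have d5 := hA k l h3.symm; have d6 := hA l k h3
          field_simp
          ring
        · have h3' : l = k := not_not.mp h3
          simp [hd, h3']
      · have h2' : l = j := not_not.mp h2
        simp [hd, h2']
    · have h1' : k = j := not_not.mp h1
      simp [hd, h1']
  have hD3 : (∑ j, ∑ k, ∑ l, d j k l) = 0 := by
    have e1 : (∑ j, ∑ k, ∑ l, d k l j) = ∑ j, ∑ k, ∑ l, d j k l := hrot d
    have e2 : (∑ j, ∑ k, ∑ l, d j k l) = ∑ j, ∑ k, ∑ l, d l j k :=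
      hrot (fun a b c => d c a b)
    have hz : (∑ j, ∑ k, ∑ l, (d j k l + d k l j + d l j k)) = 0 :=
      Finset.sum_eq_zero fun j _ => Finset.sum_eq_zero fun k _ =>
        Finset.sum_eq_zero fun l _ => hcyc j k l
    simp only [Finset.sum_add_distrib] at hz
    rw [e1, ← e2] at hz
    linarith
  -- V = VV2
  have hV : (∑ j, (x j)^2*(S j)^2)
      = ∑ j, ∑ k, (if k ≠ j then (x j)^2 * (u j k)^2 else 0) := by
    have expand : ∀ j : Fin N, (x j)^2*(S j)^2
        = ∑ k, ∑ l, ((if l = k then (if k ≠ j then (x j)^2 * (u j k)^2 else 0) else 0)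
            + d j k l) := by
      intro j
      have e : (S j)^2 = ∑ k, ∑ l, ((if k ≠ j then u j k else 0) * (if l ≠ j then u j l else 0)) := by
        rw [sq, hSdef]; simp only
        rw [Finset.sum_mul_sum]
      rw [e, Finset.mul_sum]
      refine Finset.sum_congr rfl fun k _ => ?_
      rw [Finset.mul_sum]
      refine Finset.sum_congr rfl fun l _ => ?_
      by_cases hlk : l = k
      · subst hlk
        by_cases hk : l ≠ j
        · rw [if_pos hk, if_pos rfl, if_pos hk, hd]; simp only
          rw [if_neg (by rintro ⟨a, b, c⟩; exact c rfl)]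
          ring
        · rw [if_neg hk, if_pos rfl, if_neg hk, hd]; simp only
          rw [if_neg (by rintro ⟨a, b, c⟩; exact hk a)]
          ring
      · rw [if_neg hlk, hd]; simp only
        by_cases hk : k ≠ j
        · by_cases hl : l ≠ j
          · rw [if_pos hk, if_pos hl, if_pos ⟨hk, hl, hlk⟩]; ring
          · rw [if_neg hl, if_neg (show ¬(k ≠ j ∧ l ≠ j ∧ l ≠ k) from fun h => hl h.2.1)]; ring
        · rw [if_neg hk, if_neg (show ¬(k ≠ j ∧ l ≠ j ∧ l ≠ k) from fun h => hk h.1)]; ring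
    rw [Finset.sum_congr rfl fun j _ => expand j]
    have split : (∑ j, ∑ k, ∑ l, ((if l = k then (if k ≠ j then (x j)^2 * (u j k)^2 else 0) else 0)
            + d j k l))
        = (∑ j, ∑ k, (if k ≠ j then (x j)^2 * (u j k)^2 else 0)) + ∑ j, ∑ k, ∑ l, d j k l := by
      simp only [Finset.sum_add_distrib]
      congr 1
      refine Finset.sum_congr rfl fun j _ => Finset.sum_congr rfl fun k _ => ?_
      rw [Finset.sum_ite_eq' Finset.univ k]
      simp
    rw [split, hD3, add_zero]
  -- QQ = 2 * VV2
  have hQQ : 2 * (∑ j, ∑ k, (if k ≠ j then (x j)^2 * (u j k)^2 else 0)) = ∑ j, Q j := by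
    have e : (∑ j, Q j) = ∑ j, ∑ k,
        (if k ≠ j then ((x j)^2 + (x k)^2)/((x j)^2 - (x k)^2)^2 else 0) := rfl
    rw [e]
    refine pair_dsum _ _ fun j k => ?_
    by_cases hk : k = j
    · simp [hk]
    · rw [if_pos hk, if_pos (Ne.symm hk), if_pos hk, hu]
      simp only
      have d1 := hA j k (Ne.symm hk)
      have d2 := hA k j hk
      field_simp
      ring
  -- QQ = 2 * P
  have hQP : (∑ j, Q j) = 2 * ∑ j, ∑ k, (if j < k then
      ((x j)^2+(x k)^2)/((x j)^2-(x k)^2)^2 else 0) := by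
    have e : (∑ j, Q j) = (∑ j, ∑ k, (if j < k then
          ((x j)^2+(x k)^2)/((x j)^2-(x k)^2)^2 else 0))
        + ∑ j, ∑ k, (if k < j then ((x j)^2+(x k)^2)/((x j)^2-(x k)^2)^2 else 0) := by
      rw [← Finset.sum_add_distrib]
      refine Finset.sum_congr rfl fun j _ => ?_
      rw [hQdef]; simp only
      rw [← Finset.sum_add_distrib]
      refine Finset.sum_congr rfl fun k _ => ?_
      rcases lt_trichotomy j k with h | h | h
      · rw [if_pos (ne_of_gt h), if_pos h, if_neg (not_lt_of_gt h), add_zero]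
      · simp [h]
      · rw [if_pos (ne_of_lt h), if_neg (not_lt_of_gt h), if_pos h, zero_add]
    have e2 : (∑ j, ∑ k, (if k < j then ((x j)^2+(x k)^2)/((x j)^2-(x k)^2)^2 else 0))
        = ∑ j, ∑ k, (if j < k then ((x j)^2+(x k)^2)/((x j)^2-(x k)^2)^2 else 0) := by
      have swap : (∑ j, ∑ k, (if k < j then ((x j)^2+(x k)^2)/((x j)^2-(x k)^2)^2 else 0))
          = ∑ j, ∑ k, (if j < k then ((x k)^2+(x j)^2)/((x k)^2-(x j)^2)^2 else 0) :=
        Finset.sum_comm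
      rw [swap]
      refine Finset.sum_congr rfl fun j _ => Finset.sum_congr rfl fun k _ => ?_
      by_cases h : j < k
      · rw [if_pos h, if_pos h]
        have : ((x k)^2-(x j)^2)^2 = ((x j)^2-(x k)^2)^2 := by ring
        rw [this, add_comm ((x k)^2)]
      · rw [if_neg h, if_neg h]
    rw [e, e2]; ring
  -- final combination
  linear_combination (2*lam) * hW + (-(4*lam*mu)) * hZ + (-(4*lam^2)) * hV
    + (-(2*lam^2)) * hQQ + (2*lam-2*lam^2) * hQP



theorem stmt_14 (N : ℕ) (hN : 1 ≤ N) (lam mu : ℝ) (hlam : 0 < lam) (hmu : 0 < mu) :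
    ∀ x : Fin N → ℝ,
      0 < x ⟨0, by omega⟩ → (∀ j k : Fin N, j < k → x j < x k) →
      calogeroB N mu lam (psi0B N mu lam) x =
        ((N : ℝ) * (1 + 2*mu + 2*lam*(N - 1))) * psi0B N mu lam x := by
  intro x hx0 hord
  have hpos : ∀ m : Fin N, 0 < x m := by
    intro m
    by_cases hm : (m : ℕ) = 0
    · have : m = ⟨0, by omega⟩ := Fin.ext (by simp [hm])
      rwa [this]
    · have hlt : (⟨0, by omega⟩ : Fin N) < m := by
        rw [Fin.lt_def]; exact Nat.pos_of_ne_zero hm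
      exact lt_trans hx0 (hord _ _ hlt)
  have hψ := psi0B_eq_exp N mu lam x hpos hord
  have hpd2 : ∀ j : Fin N, pd j (pd j (psi0B N mu lam)) x
      = psi0B N mu lam x * ((D1B N mu lam x j (x j))^2 + D2B N mu lam x j (x j)) := by
    intro j
    set U : Set ℝ := {t | 0 < t ∧ ∀ k : Fin N, (k < j → x k < t) ∧ (j < k → t < x k)} with hU
    have hUopen : IsOpen U := by
      have hrw : U = Set.Ioi 0 ∩ ⋂ k : Fin N,
          ({t : ℝ | k < j → x k < t} ∩ {t : ℝ | j < k → t < x k}) := by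
        ext t
        simp only [hU, Set.mem_setOf_eq, Set.mem_inter_iff, Set.mem_Ioi, Set.mem_iInter]
      rw [hrw]
      refine isOpen_Ioi.inter (isOpen_iInter_of_finite fun k => IsOpen.inter ?_ ?_)
      · by_cases h : k < j
        · have : {t : ℝ | k < j → x k < t} = {t : ℝ | x k < t} := by ext t; simp [h]
          rw [this]; exact isOpen_lt continuous_const continuous_id
        · have : {t : ℝ | k < j → x k < t} = Set.univ := by ext t; simp [h]
          rw [this]; exact isOpen_univ
      · by_cases h : j < k
        · have : {t : ℝ | j < k → t < x k} = {t : ℝ | t < x k} := by ext t; simp [h]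
          rw [this]; exact isOpen_lt continuous_id continuous_const
        · have : {t : ℝ | j < k → t < x k} = Set.univ := by ext t; simp [h]
          rw [this]; exact isOpen_univ
    have hxjU : x j ∈ U := ⟨hpos j, fun k => ⟨fun hk => hord k j hk, fun hk => hord j k hk⟩⟩
    have hUprop : ∀ t ∈ U, t ≠ 0 ∧ (∀ k, k ≠ j → t^2 - (x k)^2 ≠ 0) := by
      intro t ht
      obtain ⟨ht0, hk⟩ := ht
      refine ⟨ne_of_gt ht0, fun k hkj => ?_⟩
      rcases lt_or_gt_of_ne hkj with h | h
      · have h1 : x k < t := (hk k).1 h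
        have h2 : 0 < x k := hpos k
        intro hc; nlinarith
      · have h1 : t < x k := (hk k).2 h
        intro hc; nlinarith
    have hdom : ∀ t ∈ U, (∀ m, 0 < Function.update x j t m) ∧
        (∀ m k : Fin N, m < k → Function.update x j t m < Function.update x j t k) := by
      intro t ht
      obtain ⟨ht0, hcond⟩ := ht
      constructor
      · intro m
        by_cases hm : m = j
        · rw [hm, Function.update_self]; exact ht0
        · rw [Function.update_of_ne hm]; exact hpos m
      · intro m k hmk
        by_cases hm : m = j
        · have hk : k ≠ j := by rw [← hm]; exact (ne_of_lt hmk).symm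
          rw [hm, Function.update_self, Function.update_of_ne hk]
          exact (hcond k).2 (hm ▸ hmk)
        · by_cases hk : k = j
          · rw [Function.update_of_ne hm, hk, Function.update_self]
            exact (hcond m).1 (hk ▸ hmk)
          · rw [Function.update_of_ne hm, Function.update_of_ne hk]
            exact hord m k hmk
    have hpsiU : ∀ t ∈ U, psi0B N mu lam (Function.update x j t)
        = Real.exp (ellB N mu lam (Function.update x j t)) := fun t ht =>
      psi0B_eq_exp N mu lam _ (hdom t ht).1 (hdom t ht).2
    have hstep : ∀ t ∈ U, pd j (psi0B N mu lam) (Function.update x j t)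
        = Real.exp (ellB N mu lam (Function.update x j t)) * D1B N mu lam x j t := by
      intro t ht
      have heq : (fun s => psi0B N mu lam (Function.update x j s))
          =ᶠ[nhds t] (fun s => Real.exp (ellB N mu lam (Function.update x j s))) :=
        Filter.eventuallyEq_of_mem (hUopen.mem_nhds ht) (fun s hs => hpsiU s hs)
      have hder : HasDerivAt (fun s => Real.exp (ellB N mu lam (Function.update x j s)))
          (Real.exp (ellB N mu lam (Function.update x j t)) * D1B N mu lam x j t) t :=
        (hasDerivAt_ellB_update N mu lam x j t (hUprop t ht).1 (hUprop t ht).2).exp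
      have hrw : pd j (psi0B N mu lam) (Function.update x j t)
          = deriv (fun s => psi0B N mu lam (Function.update x j s)) t := by
        simp only [pd, Function.update_idem, Function.update_self]
      rw [hrw, heq.deriv_eq, hder.deriv]
    have heq2 : (fun t => pd j (psi0B N mu lam) (Function.update x j t))
        =ᶠ[nhds (x j)] (fun t => Real.exp (ellB N mu lam (Function.update x j t))
            * D1B N mu lam x j t) :=
      Filter.eventuallyEq_of_mem (hUopen.mem_nhds hxjU) (fun t ht => hstep t ht)
    have hder2 : HasDerivAt (fun t => Real.exp (ellB N mu lam (Function.update x j t))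
          * D1B N mu lam x j t)
        ((Real.exp (ellB N mu lam (Function.update x j (x j))) * D1B N mu lam x j (x j))
            * D1B N mu lam x j (x j)
          + Real.exp (ellB N mu lam (Function.update x j (x j))) * D2B N mu lam x j (x j))
        (x j) :=
      ((hasDerivAt_ellB_update N mu lam x j (x j) (hUprop _ hxjU).1 (hUprop _ hxjU).2).exp).mul
        (hasDerivAt_D1B N mu lam x j (x j) (hUprop _ hxjU).1 (hUprop _ hxjU).2)
    have hrw2 : pd j (pd j (psi0B N mu lam)) x
        = deriv (fun t => pd j (psi0B N mu lam) (Function.update x j t)) (x j) := rfl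
    rw [hrw2, heq2.deriv_eq, hder2.deriv, Function.update_eq_self, ← hψ]
    ring
  have hA : ∀ j k : Fin N, j ≠ k → (x j)^2 - (x k)^2 ≠ 0 := by
    intro j k hjk
    rcases lt_or_gt_of_ne hjk with h | h
    · have h1 := hord j k h; have h2 := hpos j; intro hc; nlinarith
    · have h1 := hord k j h; have h2 := hpos k; intro hc; nlinarith
  have h0 : ∀ j : Fin N, x j ≠ 0 := fun j => ne_of_gt (hpos j)
  have key := scalarB N mu lam x h0 hA
  have e1 : (∑ j, (- pd j (pd j (psi0B N mu lam)) x
        + ((x j)^2 + mu*(mu-1)/(x j)^2) * psi0B N mu lam x))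
      = (∑ j, (-(D1B N mu lam x j (x j))^2 - D2B N mu lam x j (x j)
          + (x j)^2 + mu*(mu-1)/(x j)^2)) * psi0B N mu lam x := by
    rw [Finset.sum_mul]
    refine Finset.sum_congr rfl fun j _ => ?_
    rw [hpd2 j]; ring
  have e2 : (∑ j, ∑ k, (if j < k then
        ((x j)^2 + (x k)^2) / ((x j)^2 - (x k)^2)^2 * psi0B N mu lam x else 0))
      = (∑ j, ∑ k, (if j < k then ((x j)^2+(x k)^2)/((x j)^2-(x k)^2)^2 else 0))
          * psi0B N mu lam x := by
    rw [Finset.sum_mul]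
    refine Finset.sum_congr rfl fun j _ => ?_
    rw [Finset.sum_mul]
    refine Finset.sum_congr rfl fun k _ => ?_
    by_cases h : j < k <;> simp [h]
  show (∑ j, (- pd j (pd j (psi0B N mu lam)) x
        + ((x j)^2 + mu*(mu-1)/(x j)^2) * psi0B N mu lam x)) +
      4*lam*(lam-1) * ∑ j, ∑ k, (if j < k then
        ((x j)^2 + (x k)^2) / ((x j)^2 - (x k)^2)^2 * psi0B N mu lam x else 0)
      = ((N : ℝ) * (1 + 2*mu + 2*lam*(N - 1))) * psi0B N mu lam x
  rw [e1, e2]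
  linear_combination (psi0B N mu lam x) * key
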